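/- arXiv:1304.7561 — 4 statements merged into one kernel-verified Lean document; each statement's English description precedes it below -/
import Mathlib

section
/- Let H be a group and a, b, c ∈ H. In the quotient H/[H,[H,H]], the cyclic relation 'cba = bac = acb' holds (for the images of a, b, c) if and only if the images satisfy [b,a] = [c,b] = [c,a]⁻¹. -/
open scoped commutatorElement

/-! Modulo `[H,[H,H]]` every commutator is central. Whenever `⁅z,x⁆` commutes with `y`,
`z y x (y x z)⁻¹ = ⁅z,y⁆ ⁅z,x⁆`, so `cba = bac` and `bac = acb` each become an equation
between two commutators: `⁅c,b⁆ = ⁅c,a⁆⁻¹` and `⁅b,a⁆ = ⁅c,b⁆` respectively. -/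

theorem mul_mul_eq_mul_mul_iff_commutatorElement_eq_inv {G : Type*} [Group G] {x y z : G}
    (h : Commute ⁅z, x⁆ y) : z * y * x = y * x * z ↔ ⁅z, y⁆ = ⁅z, x⁆⁻¹ := by
  have key : z * y * x * (y * x * z)⁻¹ = ⁅z, y⁆ * ⁅z, x⁆ :=
    calc z * y * x * (y * x * z)⁻¹ = ⁅z, y⁆ * (y * ⁅z, x⁆ * y⁻¹) := by
          simp only [commutatorElement_def]; group
      _ = ⁅z, y⁆ * ⁅z, x⁆ := by rw [h.symm.eq, mul_inv_cancel_right]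
  rw [← mul_inv_eq_one, key, mul_eq_one_iff_eq_inv]

theorem commute_commutatorElement_quotient_lowerCentralSeries_two {G : Type*} [Group G]
    (u v w : G ⧸ (⊤ : Subgroup G).lowerCentralSeries 2) : Commute ⁅u, v⁆ w := by
  obtain ⟨x, rfl⟩ := QuotientGroup.mk_surjective u
  obtain ⟨y, rfl⟩ := QuotientGroup.mk_surjective v
  obtain ⟨z, rfl⟩ := QuotientGroup.mk_surjective w
  rw [← commutatorElement_eq_one_iff_commute]
  exact (QuotientGroup.eq_one_iff ⁅⁅x, y⁆, z⁆).mpr <| Subgroup.commutator_mem_commutator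
    (Subgroup.commutator_mem_commutator (Subgroup.mem_top _) (Subgroup.mem_top _))
    (Subgroup.mem_top _)

/-- In the quotient `H/[H,[H,H]]`, the cyclic relation `cba = bac = acb` holds for the
images of `a, b, c` iff the images satisfy `[b,a] = [c,b] = [c,a]⁻¹`. -/
theorem cyclic_relation_iff_commutators (H : Type*) [Group H] (a b c : H) :
    (((c * b * a : H) : H ⧸ Subgroup.lowerCentralSeries (⊤ : Subgroup H) 2) = ((b * a * c : H) : H ⧸ Subgroup.lowerCentralSeries (⊤ : Subgroup H) 2) ∧
     ((b * a * c : H) : H ⧸ Subgroup.lowerCentralSeries (⊤ : Subgroup H) 2) = ((a * c * b : H) : H ⧸ Subgroup.lowerCentralSeries (⊤ : Subgroup H) 2)) ↔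
    ((⁅(b : H ⧸ Subgroup.lowerCentralSeries (⊤ : Subgroup H) 2), (a : H ⧸ Subgroup.lowerCentralSeries (⊤ : Subgroup H) 2)⁆ =
        ⁅(c : H ⧸ Subgroup.lowerCentralSeries (⊤ : Subgroup H) 2), (b : H ⧸ Subgroup.lowerCentralSeries (⊤ : Subgroup H) 2)⁆) ∧
     (⁅(c : H ⧸ Subgroup.lowerCentralSeries (⊤ : Subgroup H) 2), (b : H ⧸ Subgroup.lowerCentralSeries (⊤ : Subgroup H) 2)⁆ =
        ⁅(c : H ⧸ Subgroup.lowerCentralSeries (⊤ : Subgroup H) 2), (a : H ⧸ Subgroup.lowerCentralSeries (⊤ : Subgroup H) 2)⁆⁻¹)) := by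
  set Q := H ⧸ (⊤ : Subgroup H).lowerCentralSeries 2
  simp only [QuotientGroup.mk_mul]
  have cba_eq_bac :
      (c : Q) * b * a = b * a * c ↔ ⁅(c : Q), (b : Q)⁆ = ⁅(c : Q), (a : Q)⁆⁻¹ :=
    mul_mul_eq_mul_mul_iff_commutatorElement_eq_inv
      (commute_commutatorElement_quotient_lowerCentralSeries_two _ _ _)
  have bac_eq_acb :
      (b : Q) * a * c = a * c * b ↔ ⁅(b : Q), (a : Q)⁆ = ⁅(c : Q), (b : Q)⁆ := by
    rw [mul_mul_eq_mul_mul_iff_commutatorElement_eq_inv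
      (commute_commutatorElement_quotient_lowerCentralSeries_two _ _ _), commutatorElement_inv]
  rw [cba_eq_bac, bac_eq_acb, and_comm]
end

section
/- For all n ≥ 2, in the braid group B_{n+2} define σ_{n'} := σ_{n+1}σₙσ_{n+1} and Δ'_{n+1} := σ_{n'}(σ_{n-1}σ_{n'})(σ_{n-2}σ_{n-1}σ_{n'})⋯(σ₁σ₂⋯σ_{n-1}σ_{n'}). Then Δ'_{n+1} = Δ_{n+2} · σ₂σ₃⋯σₙ, where Δ_{n+2} is the Garside element of B_{n+2}. -/
/-- The braid relations on `n` generators `σ₁,…,σₙ` (indexed by `Fin n`, where index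
`i` stands for `σ_{i+1}`): the Artin presentation of the braid group `B_{n+1}`. -/
def braidRels (n : ℕ) : Set (FreeGroup (Fin n)) :=
  {r | (∃ i j : Fin n, (i : ℕ) + 1 = (j : ℕ) ∧
        r = FreeGroup.of i * FreeGroup.of j * FreeGroup.of i *
            (FreeGroup.of j * FreeGroup.of i * FreeGroup.of j)⁻¹) ∨
       (∃ i j : Fin n, (i : ℕ) + 1 < (j : ℕ) ∧
        r = FreeGroup.of i * FreeGroup.of j * (FreeGroup.of j * FreeGroup.of i)⁻¹)}

/-- The braid group `B_{n+1}`, presented with `n` Artin generators. -/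
def BraidGroup (n : ℕ) : Type := PresentedGroup (braidRels n)

instance (n : ℕ) : Group (BraidGroup n) := by unfold BraidGroup; infer_instance

/-- The Artin generator `σᵢ` (1-based index `i`, with `σᵢ = 1` out of range). -/
def σ (n : ℕ) (i : ℕ) : BraidGroup n :=
  if h : i - 1 < n ∧ 1 ≤ i then PresentedGroup.of (⟨i - 1, h.1⟩ : Fin n) else 1

/-- The ascending product `σ_a σ_{a+1} ⋯ σ_b` in `B_{n+1}` (equal to `1` if `a > b`). -/
def asc (n : ℕ) (a b : ℕ) : BraidGroup n :=
  ((List.range' a (b + 1 - a)).map (σ n)).prod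

/-- The Garside element `Δ_{n+1} = σₙ(σₙ₋₁σₙ)⋯(σ₁σ₂⋯σₙ)` of `B_{n+1}`. -/
def Delta (n : ℕ) : BraidGroup n :=
  ((List.range n).map (fun k => asc n (n - k) n)).prod

/-- The element `Δ'_{n+1} = σ_{n'}(σ_{n-1}σ_{n'})(σ_{n-2}σ_{n-1}σ_{n'})⋯(σ₁⋯σ_{n-1}σ_{n'})`
of `B_{n+2}`, where `σ_{n'} = σ_{n+1}σₙσ_{n+1}`. -/
def DeltaPrime (n : ℕ) : BraidGroup (n + 1) :=
  ((List.range n).map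
    (fun k => asc (n + 1) (n - k) (n - 1) *
      (σ (n + 1) (n + 1) * σ (n + 1) n * σ (n + 1) (n + 1)))).prod

/-!
The braid relation gives `σ_{n'} = σ_{n+1}σₙσ_{n+1} = σₙσ_{n+1}σₙ`, so the `k`-th factor of
`Δ'_{n+1}` is the row `R_k = σ_{n-k}⋯σ_{n+1}` of `Δ_{n+2} = σ_{n+1} R₀ R₁ ⋯ R_{n-1}` followed
by `σₙ`. Moving these trailing letters to the right, every row they cross lowers their index by
one, so they collect into `σ₁σ₂⋯σₙ`, leaving `R₀⋯R_{n-1} σ₁ σ₂⋯σₙ`. Finally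
`R₀⋯R_{n-1} σ₁ = σ_{n+1} R₀⋯R_{n-1}`, since `R_k` lowers `σ_{n-k+1}` to `σ_{n-k}`.
-/

lemma σ_eq_of {n i : ℕ} (h₁ : 1 ≤ i) (h₂ : i ≤ n) :
    σ n i = PresentedGroup.of (⟨i - 1, by omega⟩ : Fin n) :=
  dif_pos ⟨by omega, h₁⟩

lemma σ_eq_one {n i : ℕ} (h : i = 0 ∨ n < i) : σ n i = 1 :=
  dif_neg (by omega)

lemma σ_braid {n i : ℕ} (h₁ : 1 ≤ i) (h₂ : i < n) :
    σ n i * σ n (i + 1) * σ n i = σ n (i + 1) * σ n i * σ n (i + 1) := by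
  rw [σ_eq_of h₁ h₂.le, σ_eq_of (by omega) h₂]
  exact PresentedGroup.mk_eq_mk_of_mul_inv_mem (Or.inl ⟨_, _, by dsimp only; omega, rfl⟩)

lemma σ_commute {n i j : ℕ} (h : i + 2 ≤ j) : Commute (σ n i) (σ n j) := by
  by_cases hij : 1 ≤ i ∧ j ≤ n
  · rw [Commute, SemiconjBy, σ_eq_of hij.1 (by omega), σ_eq_of (by omega) hij.2]
    exact PresentedGroup.mk_eq_mk_of_mul_inv_mem (Or.inr ⟨_, _, by dsimp only; omega, rfl⟩)
  · rcases not_and_or.mp hij with hi | hj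
    · rw [σ_eq_one (by omega)]; exact Commute.one_left _
    · rw [σ_eq_one (i := j) (by omega)]; exact Commute.one_right _

lemma asc_of_lt {n a b : ℕ} (h : b < a) : asc n a b = 1 := by
  simp [asc, show b + 1 - a = 0 by omega]

lemma asc_self (n a : ℕ) : asc n a a = σ n a := by
  simp [asc]

lemma asc_eq_σ_mul {n a b : ℕ} (h : a ≤ b) : asc n a b = σ n a * asc n (a + 1) b := by
  rw [asc, asc, show b + 1 - a = b + 1 - (a + 1) + 1 by omega, List.range'_succ]
  simp

lemma asc_succ {n a b : ℕ} (h : a ≤ b + 1) : asc n a (b + 1) = asc n a b * σ n (b + 1) := by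
  rw [asc, asc, show b + 1 + 1 - a = b + 1 - a + 1 by omega, List.range'_concat,
    show a + 1 * (b + 1 - a) = b + 1 by omega]
  simp

lemma σ_commute_asc {n i a : ℕ} (b : ℕ) (h : i + 2 ≤ a) : Commute (σ n i) (asc n a b) :=
  Commute.list_prod_right _ _ fun _ hx => by
    obtain ⟨j, hj, rfl⟩ := List.mem_map.mp hx
    exact σ_commute (by have := (List.mem_range'_1.mp hj).1; omega)

lemma σ_succ_mul_asc {n i j m : ℕ} (hi : 1 ≤ i) (hij : i ≤ j) (hjm : j < m) (hm : m ≤ n) :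
    σ n (j + 1) * asc n i m = asc n i m * σ n j := by
  rw [asc_eq_σ_mul (by omega : i ≤ m)]
  obtain rfl | hij := eq_or_lt_of_le hij
  · rw [asc_eq_σ_mul (by omega : i + 1 ≤ m)]
    calc σ n (i + 1) * (σ n i * (σ n (i + 1) * asc n (i + 1 + 1) m))
        = σ n i * σ n (i + 1) * (σ n i * asc n (i + 1 + 1) m) := by
          rw [← mul_assoc, ← mul_assoc, ← σ_braid hi (by omega), mul_assoc]
      _ = σ n i * (σ n (i + 1) * asc n (i + 1 + 1) m) * σ n i := by
          rw [(σ_commute_asc m (by omega)).eq]; group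
  · rw [← mul_assoc, ← (σ_commute (by omega : i + 2 ≤ j + 1)).eq, mul_assoc,
      σ_succ_mul_asc (by omega) (by omega : i + 1 ≤ j) hjm hm, mul_assoc]
termination_by j - i

lemma asc_succ_mul_asc {n a b c m : ℕ} (hc : 1 ≤ c) (hca : c ≤ a) (hbm : b < m) (hm : m ≤ n) :
    asc n (a + 1) (b + 1) * asc n c m = asc n c m * asc n a b := by
  by_cases hab : a ≤ b
  · rw [asc_eq_σ_mul (by omega : a + 1 ≤ b + 1), asc_eq_σ_mul hab, mul_assoc,
      asc_succ_mul_asc hc (by omega : c ≤ a + 1) hbm hm, ← mul_assoc,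
      σ_succ_mul_asc hc hca (by omega) hm, mul_assoc]
  · rw [asc_of_lt (by omega : b + 1 < a + 1), asc_of_lt (by omega : b < a), one_mul, mul_one]
termination_by b + 1 - a

lemma deltaPrime_eq_prod_asc_mul_σ (n : ℕ) (hn : 1 ≤ n) :
    DeltaPrime n
      = ((List.range n).map fun k => asc (n + 1) (n - k) (n + 1) * σ (n + 1) n).prod := by
  refine congrArg List.prod (List.map_congr_left fun k _ => ?_)
  have hrow : asc (n + 1) (n - k) (n + 1)
      = asc (n + 1) (n - k) (n - 1) * σ (n + 1) n * σ (n + 1) (n + 1) := by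
    rw [asc_succ (by omega), ← Nat.sub_add_cancel hn, asc_succ (by omega), Nat.sub_add_cancel hn]
  rw [hrow, ← σ_braid hn (by omega)]
  group

def deltaTail (n p : ℕ) : BraidGroup (n + 1) :=
  ((List.range p).map fun k => asc (n + 1) (n - k) (n + 1)).prod

lemma delta_eq_σ_mul_deltaTail (n : ℕ) : Delta (n + 1) = σ (n + 1) (n + 1) * deltaTail n n := by
  rw [Delta, List.prod_range_succ', Nat.sub_zero, asc_self]
  simp only [Nat.succ_eq_add_one, Nat.add_sub_add_right]
  rfl

lemma deltaTail_succ (n p : ℕ) :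
    deltaTail n (p + 1) = deltaTail n p * asc (n + 1) (n - p) (n + 1) :=
  List.prod_range_succ _ _

lemma prod_asc_mul_σ_eq_deltaTail_mul {n p : ℕ} (hp : p ≤ n) :
    ((List.range p).map fun k => asc (n + 1) (n - k) (n + 1) * σ (n + 1) n).prod
      = deltaTail n p * asc (n + 1) (n - p + 1) n := by
  induction p with
  | zero => rw [asc_of_lt (by omega)]; rfl
  | succ q ih =>
    have hslide : asc (n + 1) (n - q + 1) n * asc (n + 1) (n - q) (n + 1)
        = asc (n + 1) (n - q) (n + 1) * asc (n + 1) (n - q) (n - 1) := by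
      have := asc_succ_mul_asc (n := n + 1) (a := n - q) (c := n - q) (by omega) le_rfl
        (by omega : n - 1 < n + 1) le_rfl
      rwa [Nat.sub_add_cancel (by omega : 1 ≤ n)] at this
    have hrow : asc (n + 1) (n - q) (n - 1) * σ (n + 1) n = asc (n + 1) (n - q) n := by
      have := asc_succ (n := n + 1) (a := n - q) (b := n - 1) (by omega)
      rw [Nat.sub_add_cancel (by omega : 1 ≤ n)] at this
      exact this.symm
    rw [List.prod_range_succ, ih (by omega), deltaTail_succ,
      show n - (q + 1) + 1 = n - q by omega, mul_assoc, ← mul_assoc (asc _ _ _), hslide,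
      mul_assoc, hrow, mul_assoc]

lemma σ_mul_deltaTail {n p : ℕ} (hp : p ≤ n) :
    σ (n + 1) (n + 1) * deltaTail n p = deltaTail n p * σ (n + 1) (n + 1 - p) := by
  induction p with
  | zero => simp [deltaTail]
  | succ q ih =>
    have hshift := σ_succ_mul_asc (n := n + 1) (i := n - q) (by omega) le_rfl (by omega) le_rfl
    rw [deltaTail_succ, ← mul_assoc, ih (by omega), mul_assoc,
      show n + 1 - q = n - q + 1 by omega, hshift, show n + 1 - (q + 1) = n - q by omega, mul_assoc]

/-- For `n ≥ 2`, in `B_{n+2}` one has `Δ'_{n+1} = Δ_{n+2} ⬝ σ₂σ₃⋯σₙ`. -/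
theorem deltaPrime_eq (n : ℕ) (hn : 2 ≤ n) :
    DeltaPrime n = Delta (n + 1) * asc (n + 1) 2 n :=
  calc DeltaPrime n = deltaTail n n * asc (n + 1) 1 n := by
        rw [deltaPrime_eq_prod_asc_mul_σ n (by omega), prod_asc_mul_σ_eq_deltaTail_mul le_rfl,
          Nat.sub_self]
    _ = deltaTail n n * σ (n + 1) 1 * asc (n + 1) 2 n := by
        rw [asc_eq_σ_mul (by omega), mul_assoc]
    _ = Delta (n + 1) * asc (n + 1) 2 n := by
        rw [delta_eq_σ_mul_deltaTail, σ_mul_deltaTail le_rfl, Nat.add_sub_cancel_left]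
end

section
/- The group M₃ presented by generators x₁,…,x₅ with relations x₁ = x₄, [x₁,x₂,x₃] = e, [x₃,x₄,x₅] = e, [x₁,x₂,x₅] = e, and x₂x₁x₂⁻¹ = x₄ is abelian, and is isomorphic to the free abelian group ℤ⁴. -/
/-!
Since `x₁ = x₄ = x₂x₁x₂⁻¹`, the generators `x₁` and `x₂` commute. If two letters of a cyclic
relation `[a,b,c] = e` commute, so do all three, hence `[x₁,x₂,x₃]` and `[x₁,x₂,x₅]` make
`x₃` and `x₅` commute with `x₁` and `x₂`, and `[x₃,x₁,x₅]` then makes `x₃` and `x₅` commute.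
So `M₃` is abelian. In an abelian group every cyclic relation holds, so the only relation left
is `x₁ = x₄`, and `M₃` is free abelian on `x₁, x₂, x₃, x₅`.
-/

open FreeGroup

/-- The two relators expressing the cyclic relation `[a,b,c] = e`,
i.e. `c*b*a = b*a*c` and `b*a*c = a*c*b`. -/
def cyc {α : Type*} (a b c : FreeGroup α) : Set (FreeGroup α) :=
  {c * b * a * (b * a * c)⁻¹, b * a * c * (a * c * b)⁻¹}

/-- Relators of `M₃`: generators `x₁,…,x₅` are indexed by `0,…,4`.  The relations are
`x₁ = x₄`, `[x₁,x₂,x₃] = e`, `[x₃,x₄,x₅] = e`, `[x₁,x₂,x₅] = e`, `x₂x₁x₂⁻¹ = x₄`. -/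
def M3rels : Set (FreeGroup (Fin 5)) :=
  {of 0 * (of 3)⁻¹, of 1 * of 0 * (of 1)⁻¹ * (of 3)⁻¹} ∪
    cyc (of 0) (of 1) (of 2) ∪ cyc (of 2) (of 3) (of 4) ∪ cyc (of 0) (of 1) (of 4)

/-- The group `M₃`. -/
def M3 : Type := PresentedGroup M3rels

instance : Group M3 := by unfold M3; infer_instance

section Cyclic

variable {G : Type*} [Group G] {a b c : G}

theorem commute_of_cyclic_of_commute_left (hab : Commute a b) (h₁ : c * b * a = b * a * c)
    (h₂ : b * a * c = a * c * b) : Commute a c ∧ Commute b c := by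
  have hbc : Commute b c := by
    rw [← hab.eq, mul_assoc, mul_assoc] at h₂
    exact mul_left_cancel h₂
  rw [← hbc.eq, mul_assoc, mul_assoc] at h₁
  exact ⟨(mul_left_cancel h₁).symm, hbc⟩

theorem commute_of_cyclic_of_commute_right (hbc : Commute b c) (h₁ : c * b * a = b * a * c) :
    Commute a c := by
  rw [← hbc.eq, mul_assoc, mul_assoc] at h₁
  exact (mul_left_cancel h₁).symm

end Cyclic

theorem map_eq_one_of_mem_cyc {α G : Type*} [CommGroup G] (φ : FreeGroup α →* G)
    {a b c r : FreeGroup α} (hr : r ∈ cyc a b c) : φ r = 1 := by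
  rcases hr with rfl | rfl <;>
    simp only [_root_.map_mul, _root_.map_inv, mul_inv_eq_one] <;> ac_rfl

namespace PresentedGroup

variable {α : Type*} {rels : Set (FreeGroup α)}

theorem cyclic_of_cyc_subset {a b c : FreeGroup α} (h : cyc a b c ⊆ rels) :
    mk rels c * mk rels b * mk rels a = mk rels b * mk rels a * mk rels c ∧
      mk rels b * mk rels a * mk rels c = mk rels a * mk rels c * mk rels b := by
  simp only [← _root_.map_mul]
  exact ⟨mk_eq_mk_of_mul_inv_mem (h (.inl rfl)), mk_eq_mk_of_mul_inv_mem (h (.inr rfl))⟩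

theorem mul_comm_of_commute_of (hcomm : ∀ i j : α, Commute (of i : PresentedGroup rels) (of j))
    (a b : PresentedGroup rels) : a * b = b * a := by
  have hof (x : PresentedGroup rels) (i : α) : Commute x (of i) :=
    Subgroup.mem_centralizer_singleton_iff.mp <| generated_by rels _
      (fun j => Subgroup.mem_centralizer_singleton_iff.mpr (hcomm j i)) x
  exact Subgroup.mem_centralizer_singleton_iff.mp <| generated_by rels _
    (fun j => Subgroup.mem_centralizer_singleton_iff.mpr (hof b j).symm) a

end PresentedGroup

section ZPowProd

variable {G : Type*} [CommGroup G] {ι : Type*} [Fintype ι]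

def zpowProdHom (g : ι → G) : Multiplicative (ι → ℤ) →* G where
  toFun v := ∏ i, g i ^ v.toAdd i
  map_one' := by simp
  map_mul' v w := by simp [zpow_add, Finset.prod_mul_distrib]

theorem zpowProdHom_apply (g : ι → G) (v : Multiplicative (ι → ℤ)) :
    zpowProdHom g v = ∏ i, g i ^ v.toAdd i := rfl

theorem zpowProdHom_ofAdd_single [DecidableEq ι] (g : ι → G) (k : ι) :
    zpowProdHom g (.ofAdd (Pi.single k 1)) = g k := by
  simp [zpowProdHom_apply, Pi.single_apply]

theorem MonoidHom.comp_zpowProdHom {H : Type*} [CommGroup H] (f : G →* H) (g : ι → G) :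
    f.comp (zpowProdHom g) = zpowProdHom (f ∘ g) := by
  ext v; simp [zpowProdHom_apply]

theorem zpowProdHom_ofAdd_single_eq_id [DecidableEq ι] :
    zpowProdHom (fun k : ι => Multiplicative.ofAdd (Pi.single k (1 : ℤ))) = MonoidHom.id _ :=
  MonoidHom.ext fun v => by
    rw [zpowProdHom_apply, MonoidHom.id_apply]
    simp only [← ofAdd_zsmul, ← ofAdd_sum, ← pi_eq_sum_univ', ofAdd_toAdd]

end ZPowProd

namespace M3

def x (i : Fin 5) : M3 := PresentedGroup.of i

theorem x_zero_eq_x_three : x 0 = x 3 :=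
  PresentedGroup.mk_eq_mk_of_mul_inv_mem (by simp [M3rels])

theorem conj_x_zero : x 1 * x 0 * (x 1)⁻¹ = x 3 :=
  PresentedGroup.mk_eq_mk_of_mul_inv_mem (x := of 1 * of 0 * (of 1)⁻¹) (by simp [M3rels])

theorem cyclic_x012 :
    x 2 * x 1 * x 0 = x 1 * x 0 * x 2 ∧ x 1 * x 0 * x 2 = x 0 * x 2 * x 1 :=
  PresentedGroup.cyclic_of_cyc_subset fun _ h => by simp [M3rels, h]

theorem cyclic_x234 :
    x 4 * x 3 * x 2 = x 3 * x 2 * x 4 ∧ x 3 * x 2 * x 4 = x 2 * x 4 * x 3 :=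
  PresentedGroup.cyclic_of_cyc_subset fun _ h => by simp [M3rels, h]

theorem cyclic_x014 :
    x 4 * x 1 * x 0 = x 1 * x 0 * x 4 ∧ x 1 * x 0 * x 4 = x 0 * x 4 * x 1 :=
  PresentedGroup.cyclic_of_cyc_subset fun _ h => by simp [M3rels, h]

theorem commute_x (i j : Fin 5) : Commute (x i) (x j) := by
  have c01 : Commute (x 0) (x 1) := by
    have := conj_x_zero
    rw [← x_zero_eq_x_three, mul_inv_eq_iff_eq_mul] at this
    exact this.symm
  obtain ⟨c02, c12⟩ := commute_of_cyclic_of_commute_left c01 cyclic_x012.1 cyclic_x012.2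
  obtain ⟨c04, c14⟩ := commute_of_cyclic_of_commute_left c01 cyclic_x014.1 cyclic_x014.2
  have c24 : Commute (x 2) (x 4) := by
    refine commute_of_cyclic_of_commute_right ?_ cyclic_x234.1
    rw [← x_zero_eq_x_three]; exact c04
  fin_cases i <;> fin_cases j <;>
    simp [← x_zero_eq_x_three, c01, c02, c12, c04, c14, c24,
      c01.symm, c02.symm, c12.symm, c04.symm, c14.symm, c24.symm]

theorem mul_comm (a b : M3) : a * b = b * a :=
  PresentedGroup.mul_comm_of_commute_of commute_x a b

instance : CommGroup M3 := { (inferInstance : Group M3) with mul_comm }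

theorem lift_eq_one_of_mem {G : Type*} [CommGroup G] {f : Fin 5 → G} (hf : f 0 = f 3) :
    ∀ r ∈ M3rels, FreeGroup.lift f r = 1 := by
  rintro r (((hr | hr) | hr) | hr)
  · rcases hr with rfl | rfl <;> simp [hf]
  all_goals exact map_eq_one_of_mem_cyc _ hr

def index : Fin 5 → Fin 4 := ![0, 1, 2, 0, 3]

def basis : Fin 4 → M3 := ![x 0, x 1, x 2, x 4]

theorem basis_index (i : Fin 5) : basis (index i) = x i := by
  fin_cases i <;> simp [basis, index, x_zero_eq_x_three]

def toZ4 : M3 →* Multiplicative (Fin 4 → ℤ) :=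
  PresentedGroup.toGroup (f := fun i => .ofAdd (Pi.single (index i) 1)) (lift_eq_one_of_mem rfl)

theorem toZ4_x (i : Fin 5) : toZ4 (x i) = .ofAdd (Pi.single (index i) 1) :=
  PresentedGroup.toGroup.of _

def ofZ4 : Multiplicative (Fin 4 → ℤ) →* M3 := zpowProdHom basis

theorem ofZ4_comp_toZ4 : ofZ4.comp toZ4 = MonoidHom.id M3 :=
  PresentedGroup.ext fun i => show ofZ4 (toZ4 (x i)) = x i by
    rw [toZ4_x, ofZ4, zpowProdHom_ofAdd_single, basis_index]

theorem toZ4_comp_ofZ4 : toZ4.comp ofZ4 = MonoidHom.id _ := by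
  rw [ofZ4, MonoidHom.comp_zpowProdHom, ← zpowProdHom_ofAdd_single_eq_id]
  congr 1
  funext k
  fin_cases k <;> simp [basis, toZ4_x, index]

def equivZ4 : M3 ≃* Multiplicative (Fin 4 → ℤ) :=
  MonoidHom.toMulEquiv toZ4 ofZ4 ofZ4_comp_toZ4 toZ4_comp_ofZ4

end M3

/-- `M₃` is abelian, and is isomorphic to the free abelian group `ℤ⁴`. -/
theorem M3_abelian_and_iso :
    (∀ a b : M3, a * b = b * a) ∧ Nonempty (M3 ≃* Multiplicative (Fin 4 → ℤ)) :=
  ⟨M3.mul_comm, ⟨M3.equivZ4⟩⟩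
end

section
/- The group generated by x₄, x₅, x₆ subject to the single cyclic relation [x₄,x₅,x₆] = e (i.e., x₆x₅x₄ = x₅x₄x₆ = x₄x₆x₅) is isomorphic to ℤ ⊕ F₂, the direct sum of an infinite cyclic group and a free group of rank 2. -/
open FreeGroup

/-- The group generated by `x₄, x₅, x₆` (indexed `0, 1, 2`) subject to the single
cyclic relation `[x₄,x₅,x₆] = e`, i.e. `x₆x₅x₄ = x₅x₄x₆ = x₄x₆x₅`. -/
def CycGrp : Type := PresentedGroup (cyc (of (0 : Fin 3)) (of 1) (of 2))

instance : Group CycGrp := by unfold CycGrp; infer_instance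

namespace CycAux

abbrev G := Multiplicative ℤ × FreeGroup (Fin 2)

abbrev rels : Set (FreeGroup (Fin 3)) := cyc (of (0 : Fin 3)) (of 1) (of 2)

noncomputable def f : Fin 3 → G :=
  ![(Multiplicative.ofAdd 1, (of 1 * of 0)⁻¹), (1, of 0), (1, of 1)]

theorem hrel : ∀ r ∈ rels, FreeGroup.lift f r = 1 := by
  intro r hr
  rcases hr with h | h <;> subst h <;>
    simp [f, Prod.ext_iff, mul_assoc]

/-- The forward map. -/
noncomputable def φ : CycGrp →* G := PresentedGroup.toGroup hrel

def X (i : Fin 3) : CycGrp := PresentedGroup.of i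

theorem φ_of (i : Fin 3) : φ (X i) = f i := PresentedGroup.toGroup.of hrel

theorem rel_of_mem {r : FreeGroup (Fin 3)} (h : r ∈ rels) :
    (QuotientGroup.mk r : CycGrp) = 1 := by
  apply (QuotientGroup.eq_one_iff _).2
  exact Subgroup.subset_normalClosure h

theorem rel1 : X 2 * X 1 * X 0 = X 1 * X 0 * X 2 := by
  have h := rel_of_mem (r := of 2 * of 1 * of 0 * (of 1 * of 0 * of 2)⁻¹)
    (Or.inl rfl)
  have h2 : ((QuotientGroup.mk (of 2 * of 1 * of 0 * (of 1 * of 0 * of 2)⁻¹)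
      : CycGrp)) = X 2 * X 1 * X 0 * (X 1 * X 0 * X 2)⁻¹ := rfl
  rw [h2] at h
  exact mul_inv_eq_one.mp h

theorem rel2 : X 1 * X 0 * X 2 = X 0 * X 2 * X 1 := by
  have h := rel_of_mem (r := of 1 * of 0 * of 2 * (of 0 * of 2 * of 1)⁻¹)
    (Or.inr rfl)
  have h2 : ((QuotientGroup.mk (of 1 * of 0 * of 2 * (of 0 * of 2 * of 1)⁻¹)
      : CycGrp)) = X 1 * X 0 * X 2 * (X 0 * X 2 * X 1)⁻¹ := rfl
  rw [h2] at h
  exact mul_inv_eq_one.mp h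

/-- The central element. -/
def z : CycGrp := X 2 * X 1 * X 0

theorem z_eq1 : z = X 1 * X 0 * X 2 := rel1
theorem z_eq2 : z = X 0 * X 2 * X 1 := rel1.trans rel2

theorem z_comm (i : Fin 3) : Commute z (X i) := by
  fin_cases i
  · show z * X 0 = X 0 * z
    calc z * X 0 = X 0 * X 2 * X 1 * X 0 := by rw [z_eq2]
    _ = X 0 * z := by simp [z, mul_assoc]
  · show z * X 1 = X 1 * z
    calc z * X 1 = X 1 * X 0 * X 2 * X 1 := by rw [z_eq1]
    _ = X 1 * (X 0 * X 2 * X 1) := by simp [mul_assoc]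
    _ = X 1 * z := by rw [← z_eq2]
  · show z * X 2 = X 2 * z
    calc z * X 2 = X 2 * (X 1 * X 0 * X 2) := by simp [z, mul_assoc]
    _ = X 2 * z := by rw [← z_eq1]

theorem z_central (g : CycGrp) : Commute z g := by
  have : g ∈ Subgroup.closure (Set.range (PresentedGroup.of (rels := rels))) := by
    rw [PresentedGroup.closure_range_of]; trivial
  induction this using Subgroup.closure_induction with
  | mem x hx => obtain ⟨i, rfl⟩ := hx; exact z_comm i
  | one => exact Commute.one_right z
  | mul a b _ _ ha hb => exact ha.mul_right hb
  | inv a _ ha => exact ha.inv_right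

/-- Free-group part of the inverse. -/
def ψF : FreeGroup (Fin 2) →* CycGrp := FreeGroup.lift ![X 1, X 2]

/-- The inverse map. -/
noncomputable def ψ : G →* CycGrp :=
  MonoidHom.noncommCoprod (zpowersHom CycGrp z) ψF
    (fun m n => by
      have : (zpowersHom CycGrp z) m = z ^ m.toAdd := rfl
      rw [this]
      exact (z_central (ψF n)).zpow_left _)

theorem ψ_apply (m : Multiplicative ℤ) (n : FreeGroup (Fin 2)) :
    ψ (m, n) = z ^ m.toAdd * ψF n := rfl

theorem ψ_φ : ψ.comp φ = MonoidHom.id CycGrp := by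
  apply PresentedGroup.ext
  intro i
  show ψ (φ (X i)) = X i
  fin_cases i
  · rw [φ_of]
    show ψ (Multiplicative.ofAdd 1, (of 1 * of 0)⁻¹) = X 0
    rw [ψ_apply]
    have h1 : ψF ((of 1 * of 0)⁻¹) = (X 1)⁻¹ * (X 2)⁻¹ := by simp [ψF]
    rw [h1]
    have h2 : z ^ Multiplicative.toAdd (Multiplicative.ofAdd (1 : ℤ)) = z := by simp
    rw [h2, ← mul_assoc, (z_central ((X 1)⁻¹)).eq, mul_assoc,
      (z_central ((X 2)⁻¹)).eq]
    simp [z, mul_assoc]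
  · rw [φ_of]
    show ψ ((1 : Multiplicative ℤ), of 0) = X 1
    rw [ψ_apply]; simp [ψF]
  · rw [φ_of]
    show ψ ((1 : Multiplicative ℤ), of 1) = X 2
    rw [ψ_apply]; simp [ψF]

theorem φ_z : φ z = (Multiplicative.ofAdd 1, 1) := by
  have : φ z = φ (X 2) * φ (X 1) * φ (X 0) := by simp [z]
  rw [this, φ_of, φ_of, φ_of]
  show ((1 : Multiplicative ℤ), of 1) * (1, of 0) * (Multiplicative.ofAdd 1, (of 1 * of 0)⁻¹)
    = (Multiplicative.ofAdd 1, 1)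
  ext
  · simp
  · simp [mul_assoc]

theorem φ_ψ : φ.comp ψ = MonoidHom.id G := by
  have h1 : ∀ m : Multiplicative ℤ, φ (ψ (m, 1)) = (m, 1) := by
    intro m
    rw [ψ_apply, _root_.map_one, mul_one, _root_.map_zpow, φ_z, Prod.pow_mk]
    ext
    · show (Multiplicative.ofAdd (1 : ℤ)) ^ m.toAdd = m
      rw [← ofAdd_zsmul]; simp
    · simp
  have h2 : ∀ n : FreeGroup (Fin 2), φ (ψ (1, n)) = (1, n) := by
    intro n
    have h : ψ (1, n) = ψF n := by rw [ψ_apply]; simp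
    rw [h]
    show (φ.comp ψF) n = (MonoidHom.prod 1 (MonoidHom.id _)) n
    refine DFunLike.congr_fun (FreeGroup.ext_hom _ _ fun i => ?_) n
    fin_cases i
    · show φ (ψF (of 0)) = _
      have : ψF (of 0) = X 1 := by simp [ψF]
      rw [this, φ_of]; rfl
    · show φ (ψF (of 1)) = _
      have : ψF (of 1) = X 2 := by simp [ψF]
      rw [this, φ_of]; rfl
  ext ⟨m, n⟩
  · show (φ (ψ (m, n))).1 = m
    have h : (m, n) = (m, (1 : FreeGroup (Fin 2))) * (1, n) := by simp
    rw [h, _root_.map_mul, _root_.map_mul, h1 m, h2 n]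
    simp
  · show (φ (ψ (m, n))).2 = n
    have h : (m, n) = (m, (1 : FreeGroup (Fin 2))) * (1, n) := by simp
    rw [h, _root_.map_mul, _root_.map_mul, h1 m, h2 n]
    simp

end CycAux

/-- The group with one cyclic relation of length 3 is isomorphic to `ℤ ⊕ F₂`. -/
theorem cycGrp_iso :
    Nonempty (CycGrp ≃* Multiplicative ℤ × FreeGroup (Fin 2)) := by
  exact ⟨MonoidHom.toMulEquiv CycAux.φ CycAux.ψ CycAux.ψ_φ CycAux.φ_ψ⟩
end
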